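/- For every one-dimensional sand automaton, F-surjectivity implies P-surjectivity: if every finite configuration has a finite preimage under the global function f, then every periodic configuration has a periodic preimage under f. -/

import Mathlib

/-- The extended integers `ℤ ∪ {-∞, +∞}`. -/
abbrev EZ : Type := WithBot (WithTop ℤ)

/-- Embedding of `ℤ` into the extended integers. -/
def finVal (n : ℤ) : EZ := ((n : WithTop ℤ) : EZ)

/-- The integer value of a finite extended integer (`0` on `±∞`). -/
def valZ (x : EZ) : ℤ := WithBot.recBotCoe 0 (fun y => WithTop.recTopCoe 0 id y) x

/-- The measuring device `β_l^m`. -/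
noncomputable def beta (l : ℕ) (m : ℤ) (n : EZ) : EZ :=
  if finVal (m + (l : ℤ)) < n then ⊤
  else if n < finVal (m - (l : ℤ)) then ⊥
  else WithBot.map (WithTop.map (fun k => k - m)) n

/-- Reference height: the value of `x` if finite, `0` if `x = ±∞`. -/
def refH (x : EZ) : ℤ := if x = ⊥ ∨ x = ⊤ then 0 else valZ x

/-- One-dimensional sandpile configurations. -/
abbrev Config : Type := ℤ → EZ

/-- The neighborhood sequence `d_r^i(c)`: the `2r`-tuple of measured differences. -/
noncomputable def nbhd (r : ℕ) (c : Config) (i : ℤ) : Fin (2 * r) → EZ :=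
  fun j => beta r (refH (c i))
    (c (i + (if (j : ℕ) < r then ((j : ℕ) : ℤ) - (r : ℤ) else ((j : ℕ) : ℤ) - (r : ℤ) + 1)))

/-- The global function of the sand automaton of radius `r` with local rule `lam`. -/
noncomputable def globalF (r : ℕ) (lam : (Fin (2 * r) → EZ) → ℤ) (c : Config) : Config :=
  fun i => if c i = ⊥ ∨ c i = ⊤ then c i
    else finVal (valZ (c i) + lam (nbhd r c i))

/-- Finite configurations. -/
def FiniteConf (c : Config) : Prop := ∃ k : ℕ, ∀ i : ℤ, (k : ℤ) ≤ |i| → c i = finVal 0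

/-- Periodic configurations. -/
def PeriodicConf (c : Config) : Prop := ∃ p : ℤ, p ≠ 0 ∧ ∀ i : ℤ, c (i + p) = c i

/-!
Truncate a `p`-periodic configuration `c` to a long window and take a finite preimage `e`. The
automaton moves each finite height by at most `r` and fixes `±∞`, so over a fixed width-`2r`
pattern of `c` the corresponding window of `e` takes at most `(2r+1)^(2r)` values. Hence among the
windows of `e` at positions `k p`, `0 ≤ k ≤ (2r+1)^(2r)`, two coincide, say at `k₁ < k₂`. Repeating
`e` from `k₁ p` with period `(k₂ - k₁) p` gives a periodic configuration that agrees with `e`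
on a full period widened by `r` cells on each side; as the image of a cell only depends on its
`r` neighbours on each side, its image agrees with `c` on a full period, hence everywhere.
-/

open Function Set

lemma finVal_ne_bot (z : ℤ) : finVal z ≠ ⊥ := WithBot.coe_ne_bot

lemma finVal_ne_top (z : ℤ) : finVal z ≠ ⊤ := by simp [finVal]

lemma valZ_finVal (z : ℤ) : valZ (finVal z) = z := rfl

lemma eq_finVal_valZ {x : EZ} (hbot : x ≠ ⊥) (htop : x ≠ ⊤) : x = finVal (valZ x) := by
  induction x using WithBot.recBotCoe with
  | bot => exact absurd rfl hbot
  | coe y =>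
    induction y using WithTop.recTopCoe with
    | top => exact absurd rfl htop
    | coe z => rfl

lemma eq_of_valZ_eq {x y : EZ} (hbot : x = ⊥ ↔ y = ⊥) (htop : x = ⊤ ↔ y = ⊤)
    (h : valZ x = valZ y) : x = y := by
  by_cases hx : x = ⊥
  · rw [hx, hbot.1 hx]
  by_cases hx' : x = ⊤
  · rw [hx', htop.1 hx']
  rw [eq_finVal_valZ hx hx', eq_finVal_valZ (hbot.not.1 hx) (htop.not.1 hx'), h]

lemma Function.Periodic.eq_of_eqOn_Ico {α β : Type*} [AddCommGroup α] [LinearOrder α]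
    [IsOrderedAddMonoid α] [Archimedean α] {f g : α → β} {p : α} (hf : Periodic f p)
    (hg : Periodic g p) (hp : 0 < p) (a : α) (h : EqOn f g (Ico a (a + p))) : f = g := by
  funext x
  rw [← hf.sub_zsmul_eq (toIcoDiv hp a x), ← hg.sub_zsmul_eq (toIcoDiv hp a x)]
  exact h (toIcoMod_mem_Ico hp a x)

noncomputable def periodize {α : Type*} (e : ℤ → α) {p : ℤ} (hp : 0 < p) (s : ℤ) : ℤ → α :=
  fun i => e (toIcoMod hp s i)

section periodize

variable {α : Type*} (e : ℤ → α) {p : ℤ} (hp : 0 < p) (s : ℤ)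

lemma periodic_periodize : Periodic (periodize e hp s) p :=
  fun i => congrArg e (toIcoMod_periodic hp s i)

lemma periodize_eqOn_Ico : EqOn (periodize e hp s) e (Ico s (s + p)) :=
  fun _ hi => congrArg e ((toIcoMod_eq_self hp).2 hi)

lemma periodize_eqOn_Ico_add {w : ℤ} (he : ∀ j ∈ Ico s (s + w), e (j + p) = e j) :
    EqOn (periodize e hp s) e (Ico s (s + p + w)) := by
  intro j hj
  induction h : (j - s).toNat using Nat.strong_induction_on generalizing j with
  | _ n ih =>
    by_cases hjp : j < s + p
    · exact periodize_eqOn_Ico e hp s ⟨hj.1, hjp⟩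
    · have hjq : j - p ∈ Ico s (s + w) := ⟨by linarith, by linarith [hj.2]⟩
      calc periodize e hp s j = periodize e hp s (j - p) :=
            ((periodic_periodize e hp s).sub_eq j).symm
        _ = e (j - p) := ih _ (by omega) ⟨hjq.1, by linarith [hjq.2]⟩ rfl
        _ = e j := by rw [← he _ hjq, sub_add_cancel]

end periodize

section SandAutomaton

variable {r : ℕ} {lam : (Fin (2 * r) → EZ) → ℤ}

lemma globalF_apply_eq_bot_iff (c : Config) (i : ℤ) : globalF r lam c i = ⊥ ↔ c i = ⊥ := by
  unfold globalF
  split_ifs with h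
  · rfl
  · simp only [finVal_ne_bot, false_iff]; tauto

lemma globalF_apply_eq_top_iff (c : Config) (i : ℤ) : globalF r lam c i = ⊤ ↔ c i = ⊤ := by
  unfold globalF
  split_ifs with h
  · rfl
  · simp only [finVal_ne_top, false_iff]; tauto

lemma eq_of_globalF_apply_eq {c c' : Config} {i j : ℤ}
    (h : globalF r lam c i = globalF r lam c' j) (hv : valZ (c i) = valZ (c' j)) :
    c i = c' j :=
  eq_of_valZ_eq (by rw [← globalF_apply_eq_bot_iff, h, globalF_apply_eq_bot_iff])
    (by rw [← globalF_apply_eq_top_iff, h, globalF_apply_eq_top_iff]) hv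

lemma abs_valZ_globalF_apply_sub_le (hlam : ∀ v, -(r : ℤ) ≤ lam v ∧ lam v ≤ r)
    (c : Config) (i : ℤ) : |valZ (globalF r lam c i) - valZ (c i)| ≤ r := by
  unfold globalF
  split_ifs
  · simp
  · rw [valZ_finVal, add_sub_cancel_left, abs_le]
    exact hlam _

lemma nbhd_congr {c c' : Config} {i : ℤ} (h : EqOn c c' (Icc (i - r) (i + r))) :
    nbhd r c i = nbhd r c' i := by
  funext j
  have hj := j.2
  unfold nbhd
  rw [h ⟨by omega, by omega⟩]
  congr 1
  apply h
  constructor <;> split <;> omega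

lemma globalF_apply_congr {c c' : Config} {i : ℤ} (h : EqOn c c' (Icc (i - r) (i + r))) :
    globalF r lam c i = globalF r lam c' i := by
  unfold globalF
  rw [h ⟨by omega, by omega⟩, nbhd_congr h]

lemma Function.Periodic.globalF {c : Config} {q : ℤ} (hc : Periodic c q) :
    Periodic (globalF r lam c) q := by
  intro i
  have hn : nbhd r c (i + q) = nbhd r c i := by
    funext j
    unfold nbhd
    rw [hc i, add_right_comm, hc]
  unfold _root_.globalF
  rw [hc, hn]

lemma exists_lt_windows_eq (hlam : ∀ v, -(r : ℤ) ≤ lam v ∧ lam v ≤ r) {c e : Config} {p : ℤ}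
    (hfe : ∀ k ≤ (2 * r + 1) ^ (2 * r), ∀ t ∈ Ico (0 : ℤ) (2 * r),
      globalF r lam e (t + k * p) = c t) :
    ∃ k₁ k₂ : ℕ, k₁ < k₂ ∧ k₂ ≤ (2 * r + 1) ^ (2 * r) ∧
      ∀ t ∈ Ico (0 : ℤ) (2 * r), e (t + k₁ * p) = e (t + k₂ * p) := by
  set N := (2 * r + 1) ^ (2 * r)
  let window (k : ℕ) (t : Fin (2 * r)) : ℤ := valZ (e (t + k * p))
  have hmaps : ∀ k ∈ Finset.range (N + 1), window k ∈
      Fintype.piFinset fun t : Fin (2 * r) => Finset.Icc (valZ (c t) - r) (valZ (c t) + r) := by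
    intro k hk
    rw [Fintype.mem_piFinset]
    intro t
    have hle := abs_valZ_globalF_apply_sub_le hlam e (t + k * p)
    rw [hfe k (by simpa [Nat.lt_succ_iff] using hk) t ⟨by omega, by omega⟩, abs_le] at hle
    rw [Finset.mem_Icc]
    constructor <;> linarith [hle.1, hle.2]
  have hcard : (Fintype.piFinset fun t : Fin (2 * r) =>
      Finset.Icc (valZ (c t) - r) (valZ (c t) + r)).card < (Finset.range (N + 1)).card := by
    simp only [Fintype.card_piFinset, Int.card_Icc, Finset.card_range]
    rw [Finset.prod_congr rfl fun _ _ => show (_ : ℤ).toNat = 2 * r + 1 by omega]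
    simp [N]
  obtain ⟨k₁, hk₁, k₂, hk₂, hne, hwin⟩ :=
    Finset.exists_ne_map_eq_of_card_lt_of_maps_to hcard hmaps
  rw [Finset.mem_range, Nat.lt_succ_iff] at hk₁ hk₂
  have heq : ∀ t ∈ Ico (0 : ℤ) (2 * r), e (t + k₁ * p) = e (t + k₂ * p) := by
    intro t ht
    have hval := congrFun hwin ⟨t.toNat, by have := ht.1; have := ht.2; omega⟩
    simp only [window, Int.toNat_of_nonneg ht.1] at hval
    exact eq_of_globalF_apply_eq (by rw [hfe k₁ hk₁ t ht, hfe k₂ hk₂ t ht]) hval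
  rcases hne.lt_or_gt with hlt | hlt
  · exact ⟨k₁, k₂, hlt, hk₂, heq⟩
  · exact ⟨k₂, k₁, hlt, hk₁, fun t ht => (heq t ht).symm⟩

lemma exists_periodic_preimage_of_window_repeat {c e : Config} {s q : ℤ} (hq : 0 < q)
    (hc : Periodic c q) (hfe : ∀ i ∈ Ico (s + r) (s + r + q), globalF r lam e i = c i)
    (hrep : ∀ j ∈ Ico s (s + 2 * r), e (j + q) = e j) :
    ∃ e', PeriodicConf e' ∧ globalF r lam e' = c := by
  have hagree := periodize_eqOn_Ico_add e hq s hrep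
  refine ⟨periodize e hq s, ⟨q, hq.ne', periodic_periodize e hq s⟩, ?_⟩
  refine (periodic_periodize e hq s).globalF.eq_of_eqOn_Ico hc hq (s + r) fun i hi => ?_
  have hwin : Icc (i - r) (i + r) ⊆ Ico s (s + q + 2 * r) := fun j hj =>
    ⟨by linarith [hi.1, hj.1], by linarith [hi.2, hj.2]⟩
  rw [globalF_apply_congr (hagree.mono hwin), hfe i hi]

lemma exists_periodic_preimage_of_eqOn_Ico (hlam : ∀ v, -(r : ℤ) ≤ lam v ∧ lam v ≤ r)
    {c e : Config} {p : ℤ} (hp : 0 < p) (hc : Periodic c p)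
    (hfe : ∀ i ∈ Ico 0 ((2 * r + 1) ^ (2 * r) * p + 2 * r), globalF r lam e i = c i) :
    ∃ e', PeriodicConf e' ∧ globalF r lam e' = c := by
  have hkp {k : ℕ} (hk : k ≤ (2 * r + 1) ^ (2 * r)) :
      (k : ℤ) * p ≤ (2 * r + 1) ^ (2 * r) * p :=
    mul_le_mul_of_nonneg_right (by exact_mod_cast hk) hp.le
  have hwindow : ∀ k ≤ (2 * r + 1) ^ (2 * r), ∀ t ∈ Ico (0 : ℤ) (2 * r),
      globalF r lam e (t + k * p) = c t := by
    intro k hk t ht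
    have hkp' := hkp hk
    have hk₀ : 0 ≤ (k : ℤ) * p := by positivity
    rw [hfe _ ⟨by linarith [ht.1], by linarith [ht.2]⟩, hc.nat_mul k t]
  obtain ⟨k₁, k₂, hlt, hk₂, hrep⟩ := exists_lt_windows_eq hlam hwindow
  have hk : (0 : ℤ) < k₂ - k₁ := sub_pos.2 (by exact_mod_cast hlt)
  have hk₂p := hkp hk₂
  have hk₁p : 0 ≤ (k₁ : ℤ) * p := by positivity
  refine exists_periodic_preimage_of_window_repeat (s := k₁ * p) (mul_pos hk hp)
    (hc.int_mul _) (fun i hi => hfe i ⟨?_, ?_⟩) fun j hj => ?_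
  · linarith [hi.1]
  · linarith [hi.2]
  · have := hrep (j - k₁ * p) ⟨by linarith [hj.1], by linarith [hj.2]⟩
    rw [sub_add_cancel] at this
    rw [this]
    congr 1
    ring

end SandAutomaton

theorem F_surjective_implies_P_surjective_general
    (r : ℕ) (lam : (Fin (2 * r) → EZ) → ℤ)
    (hlam : ∀ v, -(r : ℤ) ≤ lam v ∧ lam v ≤ (r : ℤ))
    (hFsurj : ∀ c : Config, FiniteConf c → ∃ c', FiniteConf c' ∧ globalF r lam c' = c) :
    ∀ c : Config, PeriodicConf c → ∃ c', PeriodicConf c' ∧ globalF r lam c' = c := by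
  rintro c ⟨p, hp, hc⟩
  have hc' : Periodic c |p| := by
    rcases abs_choice p with h | h <;> rw [h]
    exacts [hc, Periodic.neg hc]
  set n : ℤ := (2 * r + 1) ^ (2 * r) * |p| + 2 * r
  let b : Config := fun i => if i ∈ Ico 0 n then c i else finVal 0
  have hb : FiniteConf b := ⟨n.toNat, fun i hi => if_neg fun h => by
    rw [mem_Ico] at h; rw [abs_of_nonneg h.1] at hi; omega⟩
  obtain ⟨e, -, he⟩ := hFsurj b hb
  exact exists_periodic_preimage_of_eqOn_Ico hlam (abs_pos.2 hp) hc' fun i hi => by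
    rw [he]; exact if_pos hi

/-- For every one-dimensional sand automaton (radius `r ≥ 1`, local rule `lam` taking
values in `[-r, r]`), `F`-surjectivity implies `P`-surjectivity: if every finite
configuration has a finite preimage, then every periodic configuration has a
periodic preimage. -/
theorem F_surjective_implies_P_surjective
    (r : ℕ) (hr : 1 ≤ r) (lam : (Fin (2 * r) → EZ) → ℤ)
    (hlam : ∀ v, -(r : ℤ) ≤ lam v ∧ lam v ≤ (r : ℤ))
    (hFsurj : ∀ c : Config, FiniteConf c → ∃ c', FiniteConf c' ∧ globalF r lam c' = c) :
    ∀ c : Config, PeriodicConf c → ∃ c', PeriodicConf c' ∧ globalF r lam c' = c :=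
  F_surjective_implies_P_surjective_general r lam hlam hFsurj
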